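/- Let β : ℝ_{≥0} → ℝ_{>0} be strictly decreasing with β(0) ≥ 1 and lim_{s→∞} β(s) = 0, and let κ > 1, d ∈ (0,1), τ* := β⁻¹(d/κ). Then β(τ*) = d/κ < 1/κ, and for any sequence defined by x_{k} ≤ β(0)β(τ*)^{k}·x₀ + P_k where P_k := c·h₀·β(0)·Σ_{j=0}^{k-1} β(τ*)^j σ_{k-j-1} + c·h₀·σ_k + Δ·β(0)·Σ_{j=0}^{k-1} β(τ*)^j + Δ with σ_i = κ^{−i}, one has the estimate σ_k^{−1}(x_k − ε + M h₀ σ_k) ≤ β(0)‖x₀‖ + h₀(c(1 + β(0)κ/(1−d)) + M) + κ^{k}(Δ(β(0)/(1 − d/κ) + 1) − ε), for all k ≥ 0, c, h₀, Δ, M, ε ≥ 0. -/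

import Mathlib

/-!
Multiply the recursive bound by `σ_k⁻¹ = κ ^ k`. Since `β τ* = d / κ`, this turns `β(τ*)^k` into
`d ^ k ≤ 1` and the convolution `Σ β(τ*)^j σ_{k-j-1}` into `κ * Σ d ^ j ≤ κ / (1 - d)`, while
`Σ β(τ*)^j` is bounded by the full geometric series `1 / (1 - d / κ)`.
-/

open Finset

lemma geom_sum_le_inv_one_sub {K : Type*} [Field K] [LinearOrder K] [IsStrictOrderedRing K]
    {x : K} (hx : 0 ≤ x) (h'x : x < 1) (n : ℕ) : ∑ i ∈ range n, x ^ i ≤ (1 - x)⁻¹ := by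
  simpa only [range_eq_Ico, pow_zero, one_div] using
    geom_sum_Ico_le_of_lt_one (m := 0) (n := n) hx h'x

lemma pow_mul_sum_div_pow_mul_inv_pow {K : Type*} [Field K] {κ : K} (hκ : κ ≠ 0) (d : K) (k : ℕ) :
    κ ^ k * ∑ j ∈ range k, (d / κ) ^ j * κ⁻¹ ^ (k - j - 1) = κ * ∑ j ∈ range k, d ^ j := by
  rw [mul_sum, mul_sum]
  refine sum_congr rfl fun j hj => ?_
  obtain ⟨m, rfl⟩ : ∃ m, k = j + m + 1 := ⟨k - j - 1, by have := mem_range.mp hj; omega⟩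
  rw [show j + m + 1 - j - 1 = m by omega, div_pow, inv_pow, pow_succ, pow_add]
  field_simp

open Finset in
theorem recursive_estimate_general (β : ℝ → ℝ) (κ d τstar c h₀ Δ M ε : ℝ) (x : ℕ → ℝ)
    (hβ0 : 1 ≤ β 0)
    (hκ : 1 < κ) (hd : d ∈ Set.Ioo (0 : ℝ) 1)
    (hβτ : β τstar = d / κ)
    (hc : 0 ≤ c) (hh₀ : 0 ≤ h₀) (hΔ : 0 ≤ Δ)
    (hx : ∀ k, 0 ≤ x k)
    (hrec : ∀ k, x k ≤ β 0 * (β τstar) ^ k * x 0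
      + (c * h₀ * β 0 * ∑ j ∈ range k, (β τstar) ^ j * (κ⁻¹) ^ (k - j - 1)
         + c * h₀ * (κ⁻¹) ^ k
         + Δ * β 0 * ∑ j ∈ range k, (β τstar) ^ j + Δ)) :
    β τstar = d / κ ∧ β τstar < 1 / κ ∧
    ∀ k : ℕ, ((κ⁻¹ : ℝ) ^ k)⁻¹ * (x k - ε + M * h₀ * (κ⁻¹) ^ k)
      ≤ β 0 * x 0 + h₀ * (c * (1 + β 0 * κ / (1 - d)) + M)
        + κ ^ k * (Δ * (β 0 / (1 - d / κ) + 1) - ε) := by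
  obtain ⟨hd0, hd1⟩ := hd
  have hκ0 : 0 < κ := by linarith
  have hq1 : d / κ < 1 := (div_lt_one hκ0).mpr (by linarith)
  refine ⟨hβτ, hβτ ▸ div_lt_div_of_pos_right hd1 hκ0, fun k => ?_⟩
  have hrk := hrec k
  rw [hβτ] at hrk
  have hκk : κ ^ k * κ⁻¹ ^ k = 1 := by rw [← mul_pow, mul_inv_cancel₀ hκ0.ne', one_pow]
  have hdk : κ ^ k * (d / κ) ^ k = d ^ k := by rw [← mul_pow, mul_div_cancel₀ _ hκ0.ne']
  have hmix := pow_mul_sum_div_pow_mul_inv_pow hκ0.ne' d k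
  rw [show (κ⁻¹ ^ k)⁻¹ = κ ^ k by rw [inv_pow, inv_inv]]
  calc κ ^ k * (x k - ε + M * h₀ * (κ⁻¹) ^ k)
      ≤ κ ^ k * (β 0 * (d / κ) ^ k * x 0
        + (c * h₀ * β 0 * ∑ j ∈ range k, (d / κ) ^ j * (κ⁻¹) ^ (k - j - 1)
          + c * h₀ * (κ⁻¹) ^ k + Δ * β 0 * ∑ j ∈ range k, (d / κ) ^ j + Δ)
        - ε + M * h₀ * (κ⁻¹) ^ k) := by gcongr
    _ = β 0 * x 0 * d ^ k + c * h₀ * β 0 * κ * ∑ j ∈ range k, d ^ j + c * h₀ + M * h₀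
        + κ ^ k * (Δ * (β 0 * ∑ j ∈ range k, (d / κ) ^ j + 1) - ε) := by
      linear_combination (β 0 * x 0) * hdk + (c * h₀ * β 0) * hmix + (c * h₀ + M * h₀) * hκk
    _ ≤ β 0 * x 0 * 1 + c * h₀ * β 0 * κ * (1 - d)⁻¹ + c * h₀ + M * h₀
        + κ ^ k * (Δ * (β 0 * (1 - d / κ)⁻¹ + 1) - ε) := by
      gcongr
      · exact mul_nonneg (by linarith) (hx 0)
      · exact pow_le_one₀ hd0.le hd1.le
      · exact geom_sum_le_inv_one_sub hd0.le hd1 k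
      · exact geom_sum_le_inv_one_sub (by positivity) hq1 k
    _ = β 0 * x 0 + h₀ * (c * (1 + β 0 * κ / (1 - d)) + M)
        + κ ^ k * (Δ * (β 0 / (1 - d / κ) + 1) - ε) := by ring

open Finset in
theorem recursive_estimate (β : ℝ → ℝ) (κ d τstar c h₀ Δ M ε : ℝ) (x : ℕ → ℝ)
    (hβpos : ∀ s, 0 ≤ s → 0 < β s)
    (hβanti : StrictAntiOn β (Set.Ici 0))
    (hβ0 : 1 ≤ β 0)
    (hβlim : Filter.Tendsto β Filter.atTop (nhds 0))
    (hκ : 1 < κ) (hd : d ∈ Set.Ioo (0 : ℝ) 1)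
    (hτ : 0 ≤ τstar) (hβτ : β τstar = d / κ)
    (hc : 0 ≤ c) (hh₀ : 0 ≤ h₀) (hΔ : 0 ≤ Δ) (hM : 0 ≤ M) (hε : 0 ≤ ε)
    (hx : ∀ k, 0 ≤ x k)
    (hrec : ∀ k, x k ≤ β 0 * (β τstar) ^ k * x 0
      + (c * h₀ * β 0 * ∑ j ∈ range k, (β τstar) ^ j * (κ⁻¹) ^ (k - j - 1)
         + c * h₀ * (κ⁻¹) ^ k
         + Δ * β 0 * ∑ j ∈ range k, (β τstar) ^ j + Δ)) :
    β τstar = d / κ ∧ β τstar < 1 / κ ∧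
    ∀ k : ℕ, ((κ⁻¹ : ℝ) ^ k)⁻¹ * (x k - ε + M * h₀ * (κ⁻¹) ^ k)
      ≤ β 0 * x 0 + h₀ * (c * (1 + β 0 * κ / (1 - d)) + M)
        + κ ^ k * (Δ * (β 0 / (1 - d / κ) + 1) - ε) :=
  recursive_estimate_general β κ d τstar c h₀ Δ M ε x hβ0 hκ hd hβτ hc hh₀ hΔ hx hrec
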